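/- Chern's identity: let U ⊆ ℂ be open, let (f, g) be Weierstrass data on U with moreover g(z) ≠ 0 for every z ∈ U, and let N_V be the angle function for V = (0, 0, 1), namely N_V(z) = (|g(z)|² − 1)/(1 + |g(z)|²), so that 1 + N_V(z) = 2|g(z)|²/(1 + |g(z)|²) > 0. Then for every z ∈ U, Δ(ln(1 + N_V))(z) = K(z) λ(z)²; equivalently, the Laplace–Beltrami operator λ⁻²Δ of the induced metric applied to ln(1 + N_V) equals K. -/

import Mathlib

/-!
Since `1 + N_V = 2|g|²/(1 + |g|²)`, near a point of `U` we have
`ln(1 + N_V) = ln 2 + ln(0 + |g|²) - ln(1 + |g|²)`. For holomorphic `g` a direct second-derivative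
computation gives `Δ ln(c + |g|²) = 4c|g'|²/(c + |g|²)²` (harmonic for `c = 0`), hence
`Δ ln(1 + N_V) = -4|g'|²/(1 + |g|²)²`, and this is `K λ²` because the factors `|f|` cancel.
Linearity of `Δ` is taken from Mathlib's Laplacian, which agrees with `flatLaplacian` on
`C²` functions.
-/

/-- The flat Laplacian `Δ = ∂²/∂x² + ∂²/∂y²` on `ℂ ≃ ℝ²`, where the `x`-direction
is `1 : ℂ` and the `y`-direction is `I : ℂ`. -/
noncomputable def flatLaplacian (F : ℂ → ℝ) (z : ℂ) : ℝ :=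
  fderiv ℝ (fun w => fderiv ℝ F w 1) z 1 +
    fderiv ℝ (fun w => fderiv ℝ F w Complex.I) z Complex.I

open Complex ComplexConjugate Filter Topology InnerProductSpace Laplacian

theorem fderiv_fderiv_apply_eq_iteratedFDeriv {F : ℂ → ℝ} {z : ℂ} (hF : ContDiffAt ℝ 2 F z)
    (v : ℂ) : fderiv ℝ (fun w => fderiv ℝ F w v) z v = iteratedFDeriv ℝ 2 F z ![v, v] := by
  have h : DifferentiableAt ℝ (fderiv ℝ F) z :=
    (hF.fderiv_right (m := 1) (by norm_num)).differentiableAt one_ne_zero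
  rw [iteratedFDeriv_two_apply, fderiv_clm_apply h (differentiableAt_const v)]
  simp

theorem flatLaplacian_eq_laplacian {F : ℂ → ℝ} {z : ℂ} (hF : ContDiffAt ℝ 2 F z) :
    flatLaplacian F z = Δ F z := by
  rw [flatLaplacian, laplacian_eq_iteratedFDeriv_complexPlane,
    fderiv_fderiv_apply_eq_iteratedFDeriv hF, fderiv_fderiv_apply_eq_iteratedFDeriv hF]

section LogAddNormSq

variable {g : ℂ → ℂ} {z : ℂ} {c : ℝ}

theorem DifferentiableAt.hasFDerivAt_mul_deriv (hg : DifferentiableAt ℂ g z) :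
    HasFDerivAt g (ContinuousLinearMap.mul ℝ ℂ (deriv g z)) z := by
  refine (hg.hasDerivAt.hasFDerivAt.restrictScalars ℝ).congr_fderiv ?_
  ext v
  simp [mul_comm]

theorem AnalyticAt.contDiffAt_log_add_norm_sq_comp (hg : AnalyticAt ℂ g z)
    (hc : c + ‖g z‖ ^ 2 ≠ 0) {n : WithTop ℕ∞} :
    ContDiffAt ℝ n (fun w => Real.log (c + ‖g w‖ ^ 2)) z :=
  (contDiffAt_const.add ((hg.contDiffAt.restrict_scalars ℝ).norm_sq ℝ)).log hc

theorem fderiv_log_add_norm_sq_comp_apply (hg : DifferentiableAt ℂ g z)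
    (hc : c + ‖g z‖ ^ 2 ≠ 0) (v : ℂ) :
    fderiv ℝ (fun w => Real.log (c + ‖g w‖ ^ 2)) z v
      = 2 * (v * deriv g z * conj (g z)).re / (c + ‖g z‖ ^ 2) := by
  rw [((hg.hasFDerivAt_mul_deriv.norm_sq.const_add c).log hc).fderiv]
  simp only [smul_apply, ContinuousLinearMap.comp_apply, ContinuousLinearMap.mul_apply',
    coe_innerSL_apply, Complex.inner, mul_re, conj_re, mul_im, conj_im, mul_neg, sub_neg_eq_add,
    smul_add, nsmul_eq_mul, Nat.cast_ofNat, smul_eq_mul]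
  ring

theorem AnalyticAt.fderiv_fderiv_log_add_norm_sq_comp_apply (hg : AnalyticAt ℂ g z)
    (hc : c + ‖g z‖ ^ 2 ≠ 0) (v : ℂ) :
    fderiv ℝ (fun w => fderiv ℝ (fun x => Real.log (c + ‖g x‖ ^ 2)) w v) z v =
      2 * (v * (deriv (deriv g) z * v * conj (g z) + deriv g z * conj (deriv g z * v))).re
          / (c + ‖g z‖ ^ 2)
        - (2 * (v * deriv g z * conj (g z)).re) ^ 2 / (c + ‖g z‖ ^ 2) ^ 2 := by
  have hc_near : ∀ᶠ w in 𝓝 z, c + ‖g w‖ ^ 2 ≠ 0 :=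
    (continuousAt_const.add (hg.continuousAt.norm.pow 2)).eventually_ne hc
  have hfirst : (fun w => fderiv ℝ (fun x => Real.log (c + ‖g x‖ ^ 2)) w v) =ᶠ[𝓝 z]
      fun w => 2 * (v * deriv g w * conj (g w)).re / (c + ‖g w‖ ^ 2) := by
    filter_upwards [hg.eventually_analyticAt, hc_near] with w hgw hcw
    exact fderiv_log_add_norm_sq_comp_apply hgw.differentiableAt hcw v
  have hg' := hg.differentiableAt.hasFDerivAt_mul_deriv
  have hnum := (reCLM.hasFDerivAt.comp z (((ContinuousLinearMap.mul ℝ ℂ v).hasFDerivAt.comp z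
    hg.deriv.differentiableAt.hasFDerivAt_mul_deriv).mul hg'.star)).const_mul 2
  have hden := (hasDerivAt_inv hc).comp_hasFDerivAt z (hg'.norm_sq.const_add c)
  have H : HasFDerivAt (fun w => 2 * (v * deriv g w * conj (g w)).re / (c + ‖g w‖ ^ 2)) _ z :=
    hnum.mul hden
  rw [hfirst.fderiv_eq, H.fderiv]
  simp only [RCLike.star_def, Function.comp_apply, Pi.mul_apply, ContinuousLinearMap.mul_apply',
    reCLM_apply, mul_re, conj_re, mul_im, conj_im, mul_neg, sub_neg_eq_add, neg_smul, smul_neg,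
    ContinuousLinearMap.comp_add, smul_add, add_apply, neg_apply, smul_apply,
    ContinuousLinearMap.comp_apply, coe_innerSL_apply, Complex.inner, nsmul_eq_mul, Nat.cast_ofNat,
    smul_eq_mul, ContinuousLinearEquiv.coe_coe, starL'_apply, star_mul', neg_mul, neg_neg, map_mul,
    add_re, add_im]
  field_simp
  ring

theorem AnalyticAt.laplacian_log_add_norm_sq_comp (hg : AnalyticAt ℂ g z)
    (hc : c + ‖g z‖ ^ 2 ≠ 0) :
    Δ (fun w => Real.log (c + ‖g w‖ ^ 2)) z = 4 * c * ‖deriv g z‖ ^ 2 / (c + ‖g z‖ ^ 2) ^ 2 := by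
  rw [← flatLaplacian_eq_laplacian (hg.contDiffAt_log_add_norm_sq_comp hc), flatLaplacian,
    hg.fderiv_fderiv_log_add_norm_sq_comp_apply hc, hg.fderiv_fderiv_log_add_norm_sq_comp_apply hc]
  simp only [← Complex.normSq_eq_norm_sq] at hc ⊢
  field_simp
  simp only [add_re, mul_re, conj_re, conj_im, mul_neg, sub_neg_eq_add, normSq_apply, neg_mul,
    map_mul, conj_I, I_re, mul_zero, mul_im, I_im, mul_one, zero_sub, neg_add_rev, neg_neg, neg_re,
    zero_add, add_zero, neg_sub, zero_mul, add_im, neg_im, one_mul]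
  ring

theorem AnalyticAt.flatLaplacian_log_two_mul_norm_sq_div (hg : AnalyticAt ℂ g z) (hg0 : g z ≠ 0) :
    flatLaplacian (fun w => Real.log (2 * ‖g w‖ ^ 2 / (1 + ‖g w‖ ^ 2))) z
      = -(4 * ‖deriv g z‖ ^ 2 / (1 + ‖g z‖ ^ 2) ^ 2) := by
  have hc0 : 0 + ‖g z‖ ^ 2 ≠ 0 := by simpa using hg0
  have hc1 : 1 + ‖g z‖ ^ 2 ≠ 0 := by positivity
  have hA := hg.contDiffAt_log_add_norm_sq_comp hc0 (n := 2)
  have hAB : ContDiffAt ℝ 2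
      ((fun w => Real.log (0 + ‖g w‖ ^ 2)) - fun w => Real.log (1 + ‖g w‖ ^ 2)) z :=
    hA.sub (hg.contDiffAt_log_add_norm_sq_comp hc1)
  have hsplit : (fun w => Real.log (2 * ‖g w‖ ^ 2 / (1 + ‖g w‖ ^ 2))) =ᶠ[𝓝 z]
      (fun w => Real.log (0 + ‖g w‖ ^ 2)) - (fun w => Real.log (1 + ‖g w‖ ^ 2))
        + fun _ => Real.log 2 := by
    filter_upwards [hg.continuousAt.eventually_ne hg0] with w hw
    have hw0 : ‖g w‖ ^ 2 ≠ 0 := by simpa using hw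
    rw [Real.log_div (by positivity) (by positivity), Real.log_mul two_ne_zero hw0]
    simp only [Pi.add_apply, Pi.sub_apply, zero_add]
    ring
  rw [flatLaplacian_eq_laplacian ((hAB.add contDiffAt_const).congr_of_eventuallyEq hsplit),
    (laplacian_congr_nhds hsplit).eq_of_nhds, hAB.laplacian_add contDiffAt_const,
    hA.laplacian_sub (hg.contDiffAt_log_add_norm_sq_comp hc1),
    hg.laplacian_log_add_norm_sq_comp hc0, hg.laplacian_log_add_norm_sq_comp hc1, laplacian_const]
  simp

end LogAddNormSq

theorem chern_identity_general
    (U : Set ℂ) (hU : IsOpen U)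
    (f g : ℂ → ℂ)
    (hg : DifferentiableOn ℂ g U)
    (hf0 : ∀ z ∈ U, f z ≠ 0)
    (hg0 : ∀ z ∈ U, g z ≠ 0)
    (lam K Nv : ℂ → ℝ)
    (hlam : ∀ z, lam z = ‖f z‖ * (1 + ‖g z‖ ^ 2) / 2)
    (hK : ∀ z, K z = -(4 * ‖deriv g z‖ /
      (‖f z‖ * (1 + ‖g z‖ ^ 2) ^ 2)) ^ 2)
    (hNv : ∀ z, Nv z = (‖g z‖ ^ 2 - 1) / (1 + ‖g z‖ ^ 2)) :
    ∀ z ∈ U,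
      flatLaplacian (fun w => Real.log (1 + Nv w)) z = K z * lam z ^ 2 ∧
      (lam z ^ 2)⁻¹ * flatLaplacian (fun w => Real.log (1 + Nv w)) z = K z := by
  intro z hz
  have hNv' : (fun w => Real.log (1 + Nv w))
      = fun w => Real.log (2 * ‖g w‖ ^ 2 / (1 + ‖g w‖ ^ 2)) := by
    funext w
    rw [hNv]
    congr 1
    field_simp
    ring
  have hΔ := (hg.analyticAt (hU.mem_nhds hz)).flatLaplacian_log_two_mul_norm_sq_div (hg0 z hz)
  have hnorm_f : ‖f z‖ ≠ 0 := by simpa using hf0 z hz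
  have hlam0 : lam z ≠ 0 := by rw [hlam]; positivity
  have hKlam : flatLaplacian (fun w => Real.log (1 + Nv w)) z = K z * lam z ^ 2 := by
    rw [hNv', hΔ, hK, hlam]
    field_simp
    ring
  exact ⟨hKlam, by rw [hKlam]; field_simp⟩

/-- Chern's identity: for Weierstrass data `(f, g)` on an open set
`U ⊆ ℂ` with moreover `g ≠ 0` on `U`, and the angle function for `V = (0,0,1)`,
`N_V = (|g|² − 1)/(1 + |g|²)` (so `1 + N_V = 2|g|²/(1 + |g|²) > 0`), one has
`Δ(ln(1 + N_V))(z) = K(z) λ(z)²` for every `z ∈ U`; equivalently, the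
Laplace–Beltrami operator `λ⁻²Δ` of the induced metric applied to `ln(1 + N_V)`
equals `K`. -/
theorem chern_identity
    (U : Set ℂ) (hU : IsOpen U)
    (f g : ℂ → ℂ)
    (hf : DifferentiableOn ℂ f U) (hg : DifferentiableOn ℂ g U)
    (hf0 : ∀ z ∈ U, f z ≠ 0) (hg' : ∀ z ∈ U, deriv g z ≠ 0)
    (hg0 : ∀ z ∈ U, g z ≠ 0)
    (lam K Nv : ℂ → ℝ)
    (hlam : ∀ z, lam z = ‖f z‖ * (1 + ‖g z‖ ^ 2) / 2)
    (hK : ∀ z, K z = -(4 * ‖deriv g z‖ /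
      (‖f z‖ * (1 + ‖g z‖ ^ 2) ^ 2)) ^ 2)
    (hNv : ∀ z, Nv z = (‖g z‖ ^ 2 - 1) / (1 + ‖g z‖ ^ 2)) :
    ∀ z ∈ U,
      flatLaplacian (fun w => Real.log (1 + Nv w)) z = K z * lam z ^ 2 ∧
      (lam z ^ 2)⁻¹ * flatLaplacian (fun w => Real.log (1 + Nv w)) z = K z :=
  chern_identity_general U hU f g hg hf0 hg0 lam K Nv hlam hK hNv
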